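/- arXiv:1810.01726 — 4 statements merged into one kernel-verified Lean document; each statement's English description precedes it below -/
import Mathlib

section
/- If a DFS tree T undergoes k vertex or edge failures, and k' is the maximum number of failures on any single root-to-leaf path of T, then the updated shallow tree (rebuilt over the refined path decomposition after failures) has height at most k' + log₂ n. -/
open Classical Finset

structure RTree (V : Type*) where
  parent : V → V
  root : V
  parent_root : parent root = root
  reaches : ∀ v : V, ∃ k : ℕ, parent^[k] v = root

namespace RTree

variable {V : Type*}

/-- `u` is an ancestor of `v` (or `u = v`) in the rooted tree `T`. -/
def IsAncestor (T : RTree V) (u v : V) : Prop :=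
  ∃ k : ℕ, T.parent^[k] v = u

/-- depth of a vertex: distance (number of edges) from the root. -/
noncomputable def depth (T : RTree V) (v : V) : ℕ :=
  Nat.find (T.reaches v)

/-- number of vertices in the subtree rooted at `v`. -/
noncomputable def subtreeSize [Fintype V] (T : RTree V) (v : V) : ℕ :=
  (Finset.univ.filter fun u => T.IsAncestor v u).card

end RTree

/-- A heavy-light decomposition of a rooted tree: `heavy c` means the edge
from `parent c` to `c` is marked heavy (solid). -/
structure HLDecomp {V : Type*} [Fintype V] (T : RTree V) where
  heavy : V → Prop
  heavy_ne_root : ∀ c, heavy c → c ≠ T.root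
  heavy_max : ∀ c c', heavy c → T.parent c' = T.parent c → c' ≠ T.parent c' →
      T.subtreeSize c' ≤ T.subtreeSize c
  heavy_exists : ∀ u : V, (∃ c, T.parent c = u ∧ c ≠ u) → ∃ c, T.parent c = u ∧ c ≠ u ∧ heavy c
  heavy_unique : ∀ c c', heavy c → heavy c' → T.parent c = T.parent c' → c = c'

/-- number of light (dashed) edges on the tree path from the root to `v`. -/
noncomputable def lightCount {V : Type*} [Fintype V] (T : RTree V) (H : HLDecomp T) (v : V) : ℕ :=
  (Finset.univ.filter fun u => T.IsAncestor u v ∧ u ≠ T.root ∧ ¬ H.heavy u).card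

/-!
A path of the refined decomposition starts at the root, below a light edge, or below a failed
vertex. Distinct vertices on one root path have distinct parents, so at most `k'` of the tops on
the path to `v` hang below a failure. Crossing a light edge upwards at least doubles the subtree
size, so `2 ^ lightCount v * subtreeSize v ≤ n` and there are at most `log₂ n` light edges.
-/

namespace RTree

variable {V : Type*} {T : RTree V}

theorem isAncestor_self (T : RTree V) (v : V) : T.IsAncestor v v := ⟨0, rfl⟩

theorem IsAncestor.parent {u w : V} (h : T.IsAncestor u w) : T.IsAncestor (T.parent u) w := by
  obtain ⟨k, hk⟩ := h
  exact ⟨k + 1, by rw [Function.iterate_succ_apply', hk]⟩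

theorem isAncestor_iff {u v : V} : T.IsAncestor u v ↔ u = v ∨ T.IsAncestor u (T.parent v) := by
  constructor
  · rintro ⟨_ | k, hk⟩
    · exact Or.inl hk.symm
    · exact Or.inr ⟨k, by rwa [← Function.iterate_succ_apply]⟩
  · rintro (rfl | ⟨k, hk⟩)
    · exact T.isAncestor_self u
    · exact ⟨k + 1, by rwa [Function.iterate_succ_apply]⟩

theorem isAncestor_root_iff {u : V} : T.IsAncestor u T.root ↔ u = T.root := by
  constructor
  · rintro ⟨k, hk⟩
    rw [← hk, Function.iterate_fixed T.parent_root]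
  · rintro rfl
    exact T.isAncestor_self _

theorem IsAncestor.total {u c w : V} (hu : T.IsAncestor u w) (hc : T.IsAncestor c w) :
    T.IsAncestor u c ∨ T.IsAncestor c u := by
  obtain ⟨a, rfl⟩ := hu
  obtain ⟨b, rfl⟩ := hc
  rcases le_total a b with hab | hba
  · exact Or.inr ⟨b - a, by rw [← Function.iterate_add_apply, Nat.sub_add_cancel hab]⟩
  · exact Or.inl ⟨a - b, by rw [← Function.iterate_add_apply, Nat.sub_add_cancel hba]⟩

/-- A vertex on a cycle of `parent` is periodic, yet some iterate sends it to the fixed root. -/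
theorem eq_root_of_isAncestor_parent {u : V} (h : T.IsAncestor u (T.parent u)) : u = T.root := by
  obtain ⟨k, hk⟩ := h
  obtain ⟨K, hK⟩ := T.reaches u
  have hper : Function.IsPeriodicPt T.parent (k + 1) u := by
    rwa [Function.IsPeriodicPt, Function.IsFixedPt, Function.iterate_succ_apply]
  calc u = T.parent^[(k + 1) * K] u := (hper.mul_const K).eq.symm
    _ = T.parent^[k * K] (T.parent^[K] u) := by rw [← Function.iterate_add_apply, add_one_mul]
    _ = T.root := by rw [hK, Function.iterate_fixed T.parent_root]

theorem parent_ne_self {u : V} (h : u ≠ T.root) : T.parent u ≠ u :=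
  fun hu => h (eq_root_of_isAncestor_parent ⟨0, hu⟩)

theorem eq_of_parent_eq {u c w : V} (hu : T.IsAncestor u w) (hc : T.IsAncestor c w)
    (hur : u ≠ T.root) (hcr : c ≠ T.root) (hpar : T.parent u = T.parent c) : u = c := by
  rcases hu.total hc with huc | hcu
  · rcases isAncestor_iff.1 huc with h | h
    · exact h
    · exact absurd (eq_root_of_isAncestor_parent (hpar ▸ h)) hur
  · rcases isAncestor_iff.1 hcu with h | h
    · exact h.symm
    · exact absurd (eq_root_of_isAncestor_parent (hpar ▸ h)) hcr

variable [Fintype V]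

theorem subtreeSize_le_parent (v : V) : T.subtreeSize v ≤ T.subtreeSize (T.parent v) :=
  card_le_card fun _ hw => by
    simp only [mem_filter, mem_univ, true_and] at hw ⊢
    exact hw.parent

theorem card_filter_parent_mem_le (T : RTree V) (F : Finset V) (v : V) :
    (univ.filter fun u => T.IsAncestor u v ∧ u ∉ F ∧ T.parent u ∈ F).card ≤
      (univ.filter fun u => T.IsAncestor u v ∧ u ∈ F).card := by
  have hne_root : ∀ u, u ∉ F → T.parent u ∈ F → u ≠ T.root := by
    rintro u huF hpF rfl
    exact huF (T.parent_root ▸ hpF)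
  refine card_le_card_of_injOn T.parent (fun u hu => ?_) (fun u₁ hu₁ u₂ hu₂ hpar => ?_)
  · simp only [coe_filter, mem_univ, true_and, Set.mem_ofPred_eq] at hu ⊢
    exact ⟨hu.1.parent, hu.2.2⟩
  · simp only [coe_filter, mem_univ, true_and, Set.mem_ofPred_eq] at hu₁ hu₂
    exact eq_of_parent_eq hu₁.1 hu₂.1 (hne_root u₁ hu₁.2.1 hu₁.2.2)
      (hne_root u₂ hu₂.2.1 hu₂.2.2) hpar

end RTree

namespace HLDecomp

variable {V : Type*} [Fintype V] {T : RTree V} (H : HLDecomp T)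

theorem two_mul_subtreeSize_le_parent {u : V} (hur : u ≠ T.root) (hlight : ¬ H.heavy u) :
    2 * T.subtreeSize u ≤ T.subtreeSize (T.parent u) := by
  have hup : u ≠ T.parent u := (RTree.parent_ne_self hur).symm
  obtain ⟨c, hc, -, hheavy⟩ := H.heavy_exists (T.parent u) ⟨u, rfl, hup⟩
  have hsize : T.subtreeSize u ≤ T.subtreeSize c := H.heavy_max c u hheavy hc.symm hup
  have hdisj : Disjoint (univ.filter fun w => T.IsAncestor u w)
      (univ.filter fun w => T.IsAncestor c w) := by
    refine disjoint_left.2 fun w hwu hwc => ?_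
    simp only [mem_filter, mem_univ, true_and] at hwu hwc
    have huc : u = c := RTree.eq_of_parent_eq hwu hwc hur (H.heavy_ne_root c hheavy) hc.symm
    exact hlight (huc ▸ hheavy)
  have hsub : (univ.filter fun w => T.IsAncestor u w) ∪ (univ.filter fun w => T.IsAncestor c w)
      ⊆ univ.filter fun w => T.IsAncestor (T.parent u) w := by
    intro w hw
    simp only [mem_union, mem_filter, mem_univ, true_and] at hw ⊢
    rcases hw with h | h
    · exact h.parent
    · exact hc ▸ h.parent
  calc 2 * T.subtreeSize u ≤ T.subtreeSize u + T.subtreeSize c := by omega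
    _ = _ := (card_union_of_disjoint hdisj).symm
    _ ≤ T.subtreeSize (T.parent u) := card_le_card hsub

theorem lightCount_le_parent_add_one (v : V) :
    lightCount T H v ≤ lightCount T H (T.parent v) + 1 := by
  refine (card_le_card fun u hu => ?_).trans (card_insert_le v _)
  simp only [mem_insert, mem_filter, mem_univ, true_and] at hu ⊢
  rcases RTree.isAncestor_iff.1 hu.1 with h | h
  · exact Or.inl h
  · exact Or.inr ⟨h, hu.2⟩

theorem lightCount_le_parent {v : V} (hv : v = T.root ∨ H.heavy v) :
    lightCount T H v ≤ lightCount T H (T.parent v) := by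
  refine card_le_card fun u hu => ?_
  simp only [mem_filter, mem_univ, true_and] at hu ⊢
  rcases RTree.isAncestor_iff.1 hu.1 with rfl | h
  · tauto
  · exact ⟨h, hu.2⟩

theorem lightCount_root : lightCount T H T.root = 0 :=
  card_eq_zero.2 (filter_eq_empty_iff.2 fun _ _ h => h.2.1 (RTree.isAncestor_root_iff.1 h.1))

theorem two_pow_lightCount_mul_subtreeSize_le_parent (v : V) :
    2 ^ lightCount T H v * T.subtreeSize v ≤
      2 ^ lightCount T H (T.parent v) * T.subtreeSize (T.parent v) := by
  by_cases hv : v = T.root ∨ H.heavy v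
  · exact Nat.mul_le_mul (Nat.pow_le_pow_right two_pos (H.lightCount_le_parent hv))
      (RTree.subtreeSize_le_parent v)
  · obtain ⟨hvr, hvl⟩ := not_or.1 hv
    calc 2 ^ lightCount T H v * T.subtreeSize v
        ≤ 2 ^ (lightCount T H (T.parent v) + 1) * T.subtreeSize v :=
          Nat.mul_le_mul_right _ (Nat.pow_le_pow_right two_pos (H.lightCount_le_parent_add_one v))
      _ = 2 ^ lightCount T H (T.parent v) * (2 * T.subtreeSize v) := by ring
      _ ≤ _ := Nat.mul_le_mul_left _ (H.two_mul_subtreeSize_le_parent hvr hvl)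

theorem two_pow_lightCount_mul_subtreeSize_le_card (v : V) :
    2 ^ lightCount T H v * T.subtreeSize v ≤ Fintype.card V := by
  obtain ⟨k, hk⟩ := T.reaches v
  induction k generalizing v with
  | zero =>
    subst hk
    rw [H.lightCount_root, pow_zero, one_mul]
    exact card_le_univ _
  | succ k ih =>
    exact (H.two_pow_lightCount_mul_subtreeSize_le_parent v).trans (ih _ hk)

theorem lightCount_le_logb_card (v : V) :
    (lightCount T H v : ℝ) ≤ Real.logb 2 (Fintype.card V) := by
  have hpow : 2 ^ lightCount T H v ≤ Fintype.card V :=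
    le_of_mul_le_of_one_le_left (H.two_pow_lightCount_mul_subtreeSize_le_card v)
      (card_pos.2 ⟨v, by simpa using T.isAncestor_self v⟩)
  calc (lightCount T H v : ℝ) ≤ (Nat.log 2 (Fintype.card V) : ℕ) := by
        exact_mod_cast Nat.le_log_of_pow_le one_lt_two hpow
    _ ≤ Real.logb 2 (Fintype.card V) := by exact_mod_cast Real.natLog_le_logb (Fintype.card V) 2

end HLDecomp

/-- If a DFS tree `T` on `n` vertices undergoes `k` vertex or edge
failures, and `k'` is the maximum number of failures on any single root-to-leaf path of
`T`, then the updated shallow tree (rebuilt over the refined path decomposition after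
failures) has height at most `k' + log₂ n`.

Modelling: each failure marks a vertex of `F` (a failed vertex itself, or the lower
endpoint of a failed tree edge); the hypothesis `hk'` says every root-to-leaf path of `T`
carries at most `k'` failures.  After the failures, a surviving vertex `u` is the top of a
path of the refined decomposition iff `u` is the root, or its parent edge is light, or its
parent failed.  The depth in the updated shallow tree of the node containing a surviving
vertex `v` is the number of such tops on the root-to-`v` path minus one, and we bound it
by `k' + log₂ n`. -/
theorem shallow_tree_height_after_failures {V : Type*} [Fintype V]
    (T : RTree V) (H : HLDecomp T) (F : Finset V) (k' : ℕ)
    (hk' : ∀ v : V, (Finset.univ.filter fun u => T.IsAncestor u v ∧ u ∈ F).card ≤ k') :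
    ∀ v : V, v ∉ F →
      ((Finset.univ.filter fun u => T.IsAncestor u v ∧ u ∉ F ∧
          (u = T.root ∨ ¬ H.heavy u ∨ T.parent u ∈ F)).card : ℝ) - 1
        ≤ k' + Real.logb 2 (Fintype.card V) := by
  intro v _
  have hcover : (univ.filter fun u => T.IsAncestor u v ∧ u ∉ F ∧
      (u = T.root ∨ ¬ H.heavy u ∨ T.parent u ∈ F)) ⊆
      ({T.root} ∪ univ.filter fun u => T.IsAncestor u v ∧ u ∉ F ∧ T.parent u ∈ F) ∪
        univ.filter fun u => T.IsAncestor u v ∧ u ≠ T.root ∧ ¬ H.heavy u := by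
    intro u hu
    simp only [mem_union, mem_singleton, mem_filter, mem_univ, true_and] at hu ⊢
    by_cases hur : u = T.root <;> tauto
  have hfailed := (T.card_filter_parent_mem_le F v).trans (hk' v)
  have hcard := (card_le_card hcover).trans <| (card_union_le _ _).trans <|
    Nat.add_le_add_right ((card_union_le _ _).trans (by rw [card_singleton]; omega :
      _ ≤ 1 + k')) (lightCount T H v)
  have hcard_real := (Nat.cast_le (α := ℝ)).2 hcard
  push_cast at hcard_real
  linarith [H.lightCount_le_logb_card v]
end

section
/- Components Property of DFS: during a DFS traversal of an undirected graph, when the traversal is at vertex v, let C be a connected component of the subgraph induced by the unvisited vertices. If there exist an edge e from C to v and an edge e' from C to some already visited vertex, then there exists a valid DFS tree completion that uses edge e and never uses e'. -/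
open Classical Finset

/-!
Attaching `c₁` below `v` gives again a partial DFS state, and running DFS to the end completes it
to a DFS tree `p`. In any DFS tree in which the visited set is closed under taking parents and `c₁`
has a visited parent, `c₁` is an ancestor of every vertex reachable from it through unvisited
vertices (white-path theorem): each edge of such a path leads either to a descendant of the
previous vertex or to an ancestor of it; in the latter case the new vertex is comparable with `c₁`
and cannot lie strictly above it, since all proper ancestors of `c₁` are visited. Hence `c₂` lies
below `c₁`, so its parent is not the visited vertex `w` unless `c₂ = c₁` and `w = v`.
-/

namespace DFS

variable {V : Type*}

def IsAncestor (p : V → V) (a u : V) : Prop :=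
  ∃ k : ℕ, p^[k] u = a

namespace IsAncestor

variable {p : V → V} {a b u : V}

theorem refl (p : V → V) (u : V) : IsAncestor p u u :=
  ⟨0, rfl⟩

theorem of_parent (h : IsAncestor p a (p u)) : IsAncestor p a u :=
  let ⟨k, hk⟩ := h; ⟨k + 1, hk⟩

theorem trans (hab : IsAncestor p a b) (hbu : IsAncestor p b u) : IsAncestor p a u := by
  obtain ⟨i, rfl⟩ := hab
  obtain ⟨j, rfl⟩ := hbu
  exact ⟨i + j, Function.iterate_add_apply p i j u⟩

theorem parent_of_ne (h : IsAncestor p a u) (hau : a ≠ u) : IsAncestor p a (p u) := by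
  obtain ⟨_ | k, hk⟩ := h
  · exact absurd hk.symm hau
  · exact ⟨k, hk⟩

theorem eq_of_fixed (h : IsAncestor p a u) (hu : p u = u) : a = u := by
  obtain ⟨k, rfl⟩ := h
  exact Function.iterate_fixed hu k

theorem total (ha : IsAncestor p a u) (hb : IsAncestor p b u) :
    IsAncestor p a b ∨ IsAncestor p b a := by
  obtain ⟨i, rfl⟩ := ha
  obtain ⟨j, rfl⟩ := hb
  rcases le_total i j with hij | hji
  · refine Or.inr ⟨j - i, ?_⟩
    rw [← Function.iterate_add_apply, Nat.sub_add_cancel hij]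
  · refine Or.inl ⟨i - j, ?_⟩
    rw [← Function.iterate_add_apply, Nat.sub_add_cancel hji]

theorem mem_of_mem {S : Finset V} (hS : ∀ x ∈ S, p x ∈ S) (h : IsAncestor p a u) (hu : u ∈ S) :
    a ∈ S := by
  obtain ⟨k, rfl⟩ := h
  induction k generalizing u with
  | zero => exact hu
  | succ k ih => exact ih (hS u hu)

theorem update_iff [DecidableEq V] {S : Finset V} (hS : ∀ x ∈ S, p x ∈ S) {c : V} (hc : c ∉ S)
    (x : V) (hu : u ∈ S) : IsAncestor (Function.update p c x) a u ↔ IsAncestor p a u := by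
  suffices ∀ k, ∀ u ∈ S, (Function.update p c x)^[k] u = p^[k] u by
    simp only [IsAncestor, this _ u hu]
  intro k
  induction k with
  | zero => simp
  | succ k ih =>
    intro u hu
    rw [Function.iterate_succ_apply, Function.iterate_succ_apply,
      Function.update_of_ne (ne_of_mem_of_not_mem hu hc), ih _ (hS u hu)]

end IsAncestor

/-- The stack of the traversal is the ancestor chain of the current vertex `v`. -/
structure IsDFSState (G : SimpleGraph V) (r : V) (Vis : Finset V) (p : V → V) (v : V) : Prop where
  cur_mem : v ∈ Vis
  root_mem : r ∈ Vis
  parent_root : p r = r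
  parent_mem : ∀ u ∈ Vis, p u ∈ Vis
  adj_parent : ∀ u ∈ Vis, u ≠ r → G.Adj (p u) u
  reaches_root : ∀ u ∈ Vis, IsAncestor p r u
  dfs : ∀ a b, a ∈ Vis → b ∈ Vis → G.Adj a b → IsAncestor p b a ∨ IsAncestor p a b
  stack : ∀ a b, a ∈ Vis → b ∉ Vis → G.Adj a b → IsAncestor p a v

structure IsDFSTree (G : SimpleGraph V) (r : V) (p : V → V) : Prop where
  parent_root : p r = r
  adj_parent : ∀ u, u ≠ r → G.Adj (p u) u
  reaches_root : ∀ u, IsAncestor p r u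
  dfs : ∀ a b, G.Adj a b → IsAncestor p b a ∨ IsAncestor p a b

namespace IsDFSState

variable {G : SimpleGraph V} {r v : V} {Vis : Finset V} {p : V → V}

theorem visit [DecidableEq V] (hs : IsDFSState G r Vis p v) {u : V} (hu : u ∉ Vis)
    (hvu : G.Adj v u) : IsDFSState G r (insert u Vis) (Function.update p u v) u := by
  have hp_Vis : ∀ x ∈ Vis, Function.update p u v x = p x := fun x hx =>
    Function.update_of_ne (ne_of_mem_of_not_mem hx hu) _ _
  have hanc_iff : ∀ {a x}, x ∈ Vis → (IsAncestor (Function.update p u v) a x ↔ IsAncestor p a x) :=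
    fun hx => IsAncestor.update_iff hs.parent_mem hu v hx
  have hanc_u : ∀ {a}, IsAncestor p a v → IsAncestor (Function.update p u v) a u := fun h =>
    .of_parent (by rw [Function.update_self]; exact (hanc_iff hs.cur_mem).2 h)
  constructor
  · exact mem_insert_self u Vis
  · exact mem_insert_of_mem hs.root_mem
  · rw [hp_Vis r hs.root_mem, hs.parent_root]
  · rintro x hx
    rcases mem_insert.1 hx with rfl | hx
    · simpa using mem_insert_of_mem hs.cur_mem
    · simpa [hp_Vis x hx] using mem_insert_of_mem (hs.parent_mem x hx)
  · rintro x hx hxr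
    rcases mem_insert.1 hx with rfl | hx
    · simpa using hvu
    · simpa [hp_Vis x hx] using hs.adj_parent x hx hxr
  · rintro x hx
    rcases mem_insert.1 hx with rfl | hx
    · exact hanc_u (hs.reaches_root v hs.cur_mem)
    · exact (hanc_iff hx).2 (hs.reaches_root x hx)
  · rintro a b ha hb hab
    rcases mem_insert.1 ha with rfl | haV <;> rcases mem_insert.1 hb with rfl | hbV
    · exact absurd hab (G.loopless.irrefl _)
    · exact .inl (hanc_u (hs.stack b a hbV hu hab.symm))
    · exact .inr (hanc_u (hs.stack a b haV hu hab))
    · rw [hanc_iff haV, hanc_iff hbV]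
      exact hs.dfs a b haV hbV hab
  · rintro a b ha hb hab
    rcases mem_insert.1 ha with rfl | ha
    · exact .refl _ _
    · exact hanc_u (hs.stack a b ha (fun h => hb (mem_insert_of_mem h)) hab)

theorem backtrack (hs : IsDFSState G r Vis p v) (hv : ∀ u ∉ Vis, ¬G.Adj v u) :
    IsDFSState G r Vis p (p v) where
  __ := hs
  cur_mem := hs.parent_mem v hs.cur_mem
  stack a b ha hb hab := (hs.stack a b ha hb hab).parent_of_ne (by rintro rfl; exact hv b hb hab)

theorem mem_of_root [Fintype V] (hG : G.Preconnected) (hs : IsDFSState G r Vis p r)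
    (hr : ∀ u ∉ Vis, ¬G.Adj r u) (u : V) : u ∈ Vis := by
  by_contra hu
  obtain ⟨d, -, ha, hb⟩ := (hG r u).some.exists_boundary_dart (Vis : Set V) hs.root_mem hu
  have hab := d.adj
  rw [← (hs.stack _ _ ha hb hab).eq_of_fixed hs.parent_root] at hr
  exact hr _ hb hab

theorem toIsDFSTree (hs : IsDFSState G r Vis p v) (hVis : ∀ u, u ∈ Vis) : IsDFSTree G r p where
  parent_root := hs.parent_root
  adj_parent u := hs.adj_parent u (hVis u)
  reaches_root u := hs.reaches_root u (hVis u)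
  dfs a b := hs.dfs a b (hVis a) (hVis b)

end IsDFSState

/-- Running DFS to the end: visit an unvisited neighbour of the current vertex while there is
one, otherwise backtrack to the parent. -/
theorem exists_isDFSTree_extending [Fintype V] [DecidableEq V] {G : SimpleGraph V} {r v : V}
    {Vis : Finset V} {p : V → V} (hG : G.Preconnected) (hs : IsDFSState G r Vis p v) :
    ∃ p' : V → V, IsDFSTree G r p' ∧ ∀ u ∈ Vis, p' u = p u := by
  induction hm : #Visᶜ using Nat.strong_induction_on generalizing Vis p v with
  | _ m ihVis =>
  have hvisit : ∀ {v}, IsDFSState G r Vis p v → (∃ u ∉ Vis, G.Adj v u) →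
      ∃ p' : V → V, IsDFSTree G r p' ∧ ∀ u ∈ Vis, p' u = p u := by
    rintro v hs ⟨u, hu, hvu⟩
    have hlt : #(insert u Vis)ᶜ < m := by
      rw [← hm, compl_insert]
      exact card_erase_lt_of_mem (mem_compl.2 hu)
    obtain ⟨p', hT, hext⟩ := ihVis _ hlt (hs.visit hu hvu) rfl
    refine ⟨p', hT, fun x hx => ?_⟩
    rw [hext x (mem_insert_of_mem hx), Function.update_of_ne (ne_of_mem_of_not_mem hx hu)]
  obtain ⟨d, hd⟩ := hs.reaches_root v hs.cur_mem
  induction d generalizing v with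
  | zero =>
    subst hd
    by_cases hr : ∃ u ∉ Vis, G.Adj v u
    · exact hvisit hs hr
    · push Not at hr
      exact ⟨p, hs.toIsDFSTree (hs.mem_of_root hG hr), fun _ _ => rfl⟩
  | succ d ihDepth =>
    by_cases hv : ∃ u ∉ Vis, G.Adj v u
    · exact hvisit hs hv
    · push Not at hv
      exact ihDepth (hs.backtrack hv) hd

theorem isAncestor_of_reflTransGen_not_mem {G : SimpleGraph V} {p : V → V}
    (hdfs : ∀ a b, G.Adj a b → IsAncestor p b a ∨ IsAncestor p a b) {S : Finset V}
    (hS : ∀ x ∈ S, p x ∈ S) {a c : V} (ha : p a ∈ S)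
    (h : Relation.ReflTransGen (fun x y => G.Adj x y ∧ x ∉ S ∧ y ∉ S) a c) :
    IsAncestor p a c := by
  induction h with
  | refl => exact .refl p a
  | @tail b c _ hbc ih =>
    rcases hdfs b c hbc.1 with hcb | hbc'
    · rcases ih.total hcb with hac | hca
      · exact hac
      by_cases hc : c = a
      · exact hc ▸ .refl p c
      · exact absurd ((hca.parent_of_ne hc).mem_of_mem hS ha) hbc.2.2
    · exact ih.trans hbc'

end DFS

open DFS

theorem components_property_general {n : ℕ} (G : SimpleGraph (Fin n)) (hG : G.Connected)
    (r : Fin n) (Vis : Finset (Fin n)) (v : Fin n) (hv : v ∈ Vis) (hr : r ∈ Vis)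
    (p0 : Fin n → Fin n)
    (hp0root : p0 r = r)
    (hp0mem : ∀ u ∈ Vis, p0 u ∈ Vis)
    (hp0adj : ∀ u ∈ Vis, u ≠ r → G.Adj (p0 u) u)
    (hp0reach : ∀ u ∈ Vis, ∃ k : ℕ, p0^[k] u = r)
    (hp0dfs : ∀ a b : Fin n, a ∈ Vis → b ∈ Vis → G.Adj a b →
      (∃ k : ℕ, p0^[k] a = b) ∨ (∃ k : ℕ, p0^[k] b = a))
    (hstack : ∀ a b : Fin n, a ∈ Vis → b ∉ Vis → G.Adj a b → ∃ k : ℕ, p0^[k] v = a)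
    (C : Finset (Fin n))
    (hCunvis : ∀ c ∈ C, c ∉ Vis)
    (hCconn : ∀ c ∈ C, ∀ c' ∈ C,
      Relation.ReflTransGen (fun a b => G.Adj a b ∧ a ∉ Vis ∧ b ∉ Vis) c c')
    (c₁ : Fin n) (hc₁ : c₁ ∈ C) (he : G.Adj c₁ v)
    (c₂ : Fin n) (w : Fin n) (hc₂ : c₂ ∈ C) (hw : w ∈ Vis)
    (hne : s(c₂, w) ≠ s(c₁, v)) :
    ∃ p : Fin n → Fin n,
      p r = r ∧
      (∀ u : Fin n, u ≠ r → G.Adj (p u) u) ∧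
      (∀ u : Fin n, ∃ k : ℕ, p^[k] u = r) ∧
      (∀ a b : Fin n, G.Adj a b → (∃ k : ℕ, p^[k] a = b) ∨ (∃ k : ℕ, p^[k] b = a)) ∧
      (∀ u ∈ Vis, p u = p0 u) ∧
      p c₁ = v ∧
      p c₂ ≠ w ∧ p w ≠ c₂ := by
  have hs : IsDFSState G r Vis p0 v :=
    ⟨hv, hr, hp0root, hp0mem, hp0adj, hp0reach, hp0dfs, hstack⟩
  have hc₁V := hCunvis c₁ hc₁
  obtain ⟨p, hT, hext⟩ := exists_isDFSTree_extending hG.preconnected (hs.visit hc₁V he.symm)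
  have hp_c₁ : p c₁ = v := by simpa using hext c₁ (mem_insert_self c₁ Vis)
  have hp_Vis : ∀ u ∈ Vis, p u = p0 u := fun u hu => by
    rw [hext u (mem_insert_of_mem hu), Function.update_of_ne (ne_of_mem_of_not_mem hu hc₁V)]
  have hVis_closed : ∀ u ∈ Vis, p u ∈ Vis := fun u hu => hp_Vis u hu ▸ hp0mem u hu
  have hc₁_c₂ : IsAncestor p c₁ c₂ := isAncestor_of_reflTransGen_not_mem hT.dfs hVis_closed
    (hp_c₁ ▸ hv) (hCconn c₁ hc₁ c₂ hc₂)
  refine ⟨p, hT.parent_root, hT.adj_parent, hT.reaches_root, hT.dfs, hp_Vis, hp_c₁, ?_, ?_⟩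
  · intro hpw
    by_cases hc : c₂ = c₁
    · subst hc
      exact hne (by rw [← hpw, hp_c₁])
    · exact hc₁V ((hc₁_c₂.parent_of_ne (Ne.symm hc)).mem_of_mem hVis_closed (hpw ▸ hw))
  · rw [hp_Vis w hw]
    exact fun h => hCunvis c₂ hc₂ (h ▸ hp0mem w hw)

/-- **Components Property of DFS.** During a DFS traversal of a connected
undirected graph `G` rooted at `r`, suppose the visited vertices `Vis` carry a partial DFS
tree with parent map `p0` and current vertex `v` (every edge leaving the visited region
emanates from the stack, i.e. from an ancestor of `v`).  Let `C` be a connected component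
of the subgraph induced by the unvisited vertices.  If there is an edge `e = (c₁, v)` from
`C` to `v` and a different edge `e' = (c₂, w)` from `C` to a visited vertex `w`, then
there exists a valid completion to a DFS tree of `G` (a rooted spanning tree, with tree
edges in `G`, in which every edge of `G` joins an ancestor-descendant pair, extending the
partial tree) that uses the edge `e` and never uses `e'`. -/
theorem components_property {n : ℕ} (G : SimpleGraph (Fin n)) (hG : G.Connected)
    (r : Fin n) (Vis : Finset (Fin n)) (v : Fin n) (hv : v ∈ Vis) (hr : r ∈ Vis)
    (p0 : Fin n → Fin n)
    (hp0root : p0 r = r)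
    (hp0mem : ∀ u ∈ Vis, p0 u ∈ Vis)
    (hp0adj : ∀ u ∈ Vis, u ≠ r → G.Adj (p0 u) u)
    (hp0reach : ∀ u ∈ Vis, ∃ k : ℕ, p0^[k] u = r)
    (hp0dfs : ∀ a b : Fin n, a ∈ Vis → b ∈ Vis → G.Adj a b →
      (∃ k : ℕ, p0^[k] a = b) ∨ (∃ k : ℕ, p0^[k] b = a))
    (hstack : ∀ a b : Fin n, a ∈ Vis → b ∉ Vis → G.Adj a b → ∃ k : ℕ, p0^[k] v = a)
    (C : Finset (Fin n))
    (hCunvis : ∀ c ∈ C, c ∉ Vis)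
    (hCconn : ∀ c ∈ C, ∀ c' ∈ C,
      Relation.ReflTransGen (fun a b => G.Adj a b ∧ a ∉ Vis ∧ b ∉ Vis) c c')
    (hCclosed : ∀ c ∈ C, ∀ c' : Fin n, c' ∉ Vis →
      Relation.ReflTransGen (fun a b => G.Adj a b ∧ a ∉ Vis ∧ b ∉ Vis) c c' → c' ∈ C)
    (c₁ : Fin n) (hc₁ : c₁ ∈ C) (he : G.Adj c₁ v)
    (c₂ : Fin n) (w : Fin n) (hc₂ : c₂ ∈ C) (hw : w ∈ Vis) (he' : G.Adj c₂ w)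
    (hne : s(c₂, w) ≠ s(c₁, v)) :
    ∃ p : Fin n → Fin n,
      p r = r ∧
      (∀ u : Fin n, u ≠ r → G.Adj (p u) u) ∧
      (∀ u : Fin n, ∃ k : ℕ, p^[k] u = r) ∧
      (∀ a b : Fin n, G.Adj a b → (∃ k : ℕ, p^[k] a = b) ∨ (∃ k : ℕ, p^[k] b = a)) ∧
      (∀ u ∈ Vis, p u = p0 u) ∧
      p c₁ = v ∧
      p c₂ ≠ w ∧ p w ≠ c₂ :=
  components_property_general G hG r Vis v hv hr p0 hp0root hp0mem hp0adj hp0reach hp0dfs hstack C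
    hCunvis hCconn c₁ hc₁ he c₂ w hc₂ hw hne
end

section
/- If DFS traversal at each vertex recursively visits the heavy child first, then the vertices of every heavy path receive consecutive depth-first numbers. -/
open Classical Finset

/-!
In a DFS numbering the vertex numbered just before `c` lies in the subtree of `parent c`, and
ancestors are numbered before their descendants. So if `c` did not come right after its parent `u`,
its predecessor would lie below some other child `c'` of `u`, which is then numbered before `c`.
For a heavy `c` such a `c'` is light, and light children come after the heavy one.
-/

namespace RTree

variable {V : Type*} (T : RTree V) {u v w : V}

theorem iterate_parent_root (k : ℕ) : T.parent^[k] T.root = T.root := by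
  induction k with
  | zero => rfl
  | succ k ih => rw [Function.iterate_succ_apply', ih, T.parent_root]

variable {T}

theorem IsAncestor.trans (huv : T.IsAncestor u v) (hvw : T.IsAncestor v w) : T.IsAncestor u w := by
  obtain ⟨p, hp⟩ := huv
  obtain ⟨q, hq⟩ := hvw
  exact ⟨p + q, by rw [Function.iterate_add_apply, hq, hp]⟩

theorem IsAncestor.eq_root (h : T.IsAncestor u T.root) : u = T.root := by
  obtain ⟨k, hk⟩ := h
  rw [← hk, iterate_parent_root]

theorem IsAncestor.eq_or_isAncestor_parent (h : T.IsAncestor u v) :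
    u = v ∨ T.IsAncestor u (T.parent v) := by
  obtain ⟨_ | k, hk⟩ := h
  · exact Or.inl hk.symm
  · exact Or.inr ⟨k, hk⟩

theorem IsAncestor.exists_child_isAncestor (h : T.IsAncestor u v) (hne : u ≠ v) :
    ∃ c, T.parent c = u ∧ c ≠ u ∧ T.IsAncestor c v := by
  obtain ⟨k, hk⟩ := h
  induction k with
  | zero => exact absurd hk.symm hne
  | succ k ih =>
    rw [Function.iterate_succ_apply'] at hk
    by_cases hprev : T.parent^[k] v = u
    · exact ih hprev
    · exact ⟨_, hk, hprev, k, rfl⟩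

section DFSOrder

variable {n : ℕ} {ord : V ≃ Fin n}

theorem eq_root_of_dfn_eq_zero (hroot : (ord T.root : ℕ) = 0) (hv : (ord v : ℕ) = 0) :
    v = T.root :=
  ord.injective (Fin.ext (hv.trans hroot.symm))

theorem exists_dfn_eq_pred (hv : (ord v : ℕ) ≠ 0) : ∃ w, (ord v : ℕ) = ord w + 1 :=
  ⟨ord.symm ⟨ord v - 1, by omega⟩, by simp only [Equiv.apply_symm_apply]; omega⟩

theorem dfn_le_of_isAncestor (hroot : (ord T.root : ℕ) = 0)
    (hdfs : ∀ v w, (ord v : ℕ) = ord w + 1 → T.IsAncestor (T.parent v) w)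
    (h : T.IsAncestor u v) : (ord u : ℕ) ≤ ord v := by
  induction hm : (ord v : ℕ) generalizing v with
  | zero =>
    rw [eq_root_of_dfn_eq_zero hroot hm] at h
    rw [h.eq_root, hroot]
  | succ m ih =>
    obtain ⟨w, hw⟩ := exists_dfn_eq_pred (hm.trans_ne m.succ_ne_zero)
    rcases h.eq_or_isAncestor_parent with rfl | hpar
    · exact hm.le
    · have := ih (hpar.trans (hdfs v w hw)) (by omega)
      omega

theorem dfn_eq_dfn_parent_add_one_of_first_child (hroot : (ord T.root : ℕ) = 0)
    (hdfs : ∀ v w, (ord v : ℕ) = ord w + 1 → T.IsAncestor (T.parent v) w)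
    {c : V} (hc : c ≠ T.root)
    (hfirst : ∀ c', T.parent c' = T.parent c → c' ≠ T.parent c → c' ≠ c → (ord c : ℕ) < ord c') :
    (ord c : ℕ) = ord (T.parent c) + 1 := by
  obtain ⟨w, hw⟩ := exists_dfn_eq_pred (fun h => hc (eq_root_of_dfn_eq_zero hroot h))
  have hpw : T.IsAncestor (T.parent c) w := hdfs c w hw
  suffices T.parent c = w by rwa [this]
  by_contra hne
  obtain ⟨c', hc'u, hc'ne, hc'w⟩ := hpw.exists_child_isAncestor hne
  have hle := dfn_le_of_isAncestor hroot hdfs hc'w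
  by_cases hcc : c' = c
  · subst hcc
    omega
  · have := hfirst c' hc'u hc'ne hcc
    omega

end DFSOrder

end RTree

/-- If a DFS traversal of a rooted tree recursively visits, at each
vertex, the heavy child first (before any other children), then the vertices of every heavy
path receive consecutive depth-first numbers: each heavy child is visited immediately after
its parent. -/
theorem heavy_paths_consecutive_dfn {n : ℕ} (T : RTree (Fin n)) (H : HLDecomp T)
    (ord : Fin n ≃ Fin n)
    (hroot : (ord T.root : ℕ) = 0)
    (hdfs : ∀ i j : Fin n, (i : ℕ) = (j : ℕ) + 1 →
      T.IsAncestor (T.parent (ord.symm i)) (ord.symm j))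
    (hheavyFirst : ∀ u c c' : Fin n, T.parent c = u → H.heavy c →
      T.parent c' = u → c' ≠ u → ¬ H.heavy c' → (ord c : ℕ) < (ord c' : ℕ)) :
    ∀ c : Fin n, H.heavy c → (ord c : ℕ) = (ord (T.parent c) : ℕ) + 1 := by
  intro c hc
  have hdfs' : ∀ v w, (ord v : ℕ) = ord w + 1 → T.IsAncestor (T.parent v) w := fun v w h => by
    simpa using hdfs (ord v) (ord w) h
  refine T.dfn_eq_dfn_parent_add_one_of_first_child hroot hdfs' (H.heavy_ne_root c hc) ?_
  intro c' hc'u hc'ne hc'c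
  have hlight : ¬ H.heavy c' := fun h => hc'c (H.heavy_unique c' c h hc hc'u)
  exact hheavyFirst _ c c' rfl hc hc'u hc'ne hlight
end

section
/- In a fractional cascading structure over n sorted arrays A₁,...,Aₙ with total size m, where F₁ = A₁ and Fᵢ is the sorted merge of Aᵢ with the even-indexed elements of Fᵢ₋₁, the total number of elements stored across all Fᵢ is at most 2m. -/
/-!
The quantity `2 ∑_{i ≤ k} l i - ∑_{i ≤ k} f i` never drops below the size `f k` of the last
level: it starts at `2 l 0 - f 0 ≥ f 0`, and going from level `k` to `k + 1` changes the slack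
`2 ∑ l - ∑ f - f k` by `2 l (k + 1) - 2 f (k + 1) + f k ≥ f k - 2 ⌊f k / 2⌋ ≥ 0`.
-/

theorem sum_range_succ_add_last_le_two_mul_sum {l f : ℕ → ℕ} (h0 : f 0 ≤ l 0)
    (hstep : ∀ i, f (i + 1) ≤ l (i + 1) + f i / 2) (k : ℕ) :
    ∑ i ∈ Finset.range (k + 1), f i + f k ≤ 2 * ∑ i ∈ Finset.range (k + 1), l i := by
  induction k with
  | zero => simp only [zero_add, Finset.sum_range_one]; omega
  | succ k ih =>
    rw [Finset.sum_range_succ, Finset.sum_range_succ (f := l)]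
    have := hstep k
    have := Nat.div_mul_le_self (f k) 2
    omega

/-- In a fractional cascading structure over `n` sorted arrays
`A₁, …, Aₙ` with sizes `l i` and total size `m = Σ l i`, where `F₁ = A₁` and `Fᵢ` is the
sorted merge of `Aᵢ` with the even-indexed elements of `Fᵢ₋₁` (so that
`|Fᵢ| = l i + ⌊|Fᵢ₋₁| / 2⌋`), the total number of elements stored across all the `Fᵢ` is
at most `2 m`. -/
theorem fractional_cascading_size (n : ℕ) (l f : ℕ → ℕ)
    (h0 : f 0 = l 0)
    (hstep : ∀ i : ℕ, f (i + 1) = l (i + 1) + f i / 2) :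
    ∑ i ∈ Finset.range n, f i ≤ 2 * ∑ i ∈ Finset.range n, l i := by
  cases n with
  | zero => simp
  | succ k =>
    have := sum_range_succ_add_last_le_two_mul_sum h0.le (fun i ↦ (hstep i).le) k
    omega
end
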